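/- arXiv:2301.13192 — 2 statements merged into one kernel-verified Lean document; each statement's English description precedes it below -/
import Mathlib

section
/- Let f : ℝ^p → ℝ be twice continuously differentiable with ∇²f(θ) ⪰ m·I for all θ (m > 0) and with L-Lipschitz Hessian. Fix κ₁ ∈ (0, 1/2) and set η = (m²/(8L))·min{3(1 − 2κ₁), 2}. Let θ ∈ ℝ^p with ‖∇f(θ)‖₂ < η, and suppose g(θ) ∈ ℝ^p and H(θ) ∈ ℝ^{p×p} satisfy ‖g(θ) − ∇f(θ)‖₂ ≤ γ_g ≤ η and ‖H(θ) − ∇²f(θ)‖₂ ≤ γ_h ≤ m/2. Set Δθ_nt = −H(θ)⁻¹g(θ) and λ̃(θ)² = g(θ)ᵀH(θ)⁻¹g(θ). If ζ ≥ 8γ_g η/m + 16γ_h η²/m², then f(θ + Δθ_nt) ≤ f(θ) − κ₁ λ̃(θ)² + ζ/2. -/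
/-!
Write `u = H⁻¹ g`, so that the step is `-u`. Since `‖H - ∇²f(θ)‖ ≤ γh ≤ m/2`, the matrix `H` is
`(m/2)`-coercive; hence it is invertible, `λ̃² = ⟪H u, u⟫ ≥ (m/2)‖u‖²`, and
`‖u‖ ≤ 2‖g‖/m ≤ 4η/m`. The cubic Taylor bound for a function with `L`-Lipschitz Hessian, with the
gradient and Hessian replaced by `g` and `H` at the cost of the errors `γg`, `γh`, gives
`f(θ - u) ≤ f(θ) - λ̃²/2 + γg‖u‖ + γh‖u‖²/2 + L‖u‖³/6`. The choice of `η` makes the cubic term at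
most `(1/2 - κ₁) λ̃²`, and the bound on `‖u‖` makes the two error terms at most `ζ/2`.
-/

open scoped RealInnerProductSpace

/-- The Hessian of `f`, as the Fréchet derivative of the gradient. -/
noncomputable def hessianOf {p : ℕ} (f : EuclideanSpace ℝ (Fin p) → ℝ)
    (θ : EuclideanSpace ℝ (Fin p)) :
    EuclideanSpace ℝ (Fin p) →L[ℝ] EuclideanSpace ℝ (Fin p) :=
  fderiv ℝ (gradient f) θ

open Set

theorem le_taylor_two_of_deriv2_le {φ φ' φ'' : ℝ → ℝ} {K : ℝ}
    (hφ : ∀ t, HasDerivAt φ (φ' t) t) (hφ' : ∀ t, HasDerivAt φ' (φ'' t) t)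
    (hK : ∀ t ∈ Ico (0 : ℝ) 1, φ'' t ≤ φ'' 0 + K * t) :
    φ 1 ≤ φ 0 + φ' 0 + φ'' 0 / 2 + K / 6 := by
  have hB₁ (t : ℝ) :
      HasDerivAt (fun s ↦ φ' 0 + s * φ'' 0 + K / 2 * s ^ 2) (φ'' 0 + K * t) t :=
    ((((hasDerivAt_id t).mul_const (φ'' 0)).const_add (φ' 0)).add
      ((hasDerivAt_pow 2 t).const_mul (K / 2))).congr_deriv (by norm_num; ring)
  have hB₂ (t : ℝ) : HasDerivAt (fun s ↦ φ 0 + s * φ' 0 + s ^ 2 / 2 * φ'' 0 + K / 6 * s ^ 3)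
      (φ' 0 + t * φ'' 0 + K / 2 * t ^ 2) t :=
    (((((hasDerivAt_id t).mul_const (φ' 0)).const_add (φ 0)).add
      (((hasDerivAt_pow 2 t).div_const 2).mul_const (φ'' 0))).add
      ((hasDerivAt_pow 3 t).const_mul (K / 6))).congr_deriv (by norm_num; ring)
  have hφ'_le : ∀ t ∈ Icc (0 : ℝ) 1, φ' t ≤ φ' 0 + t * φ'' 0 + K / 2 * t ^ 2 :=
    image_le_of_deriv_right_le_deriv_boundary (fun t _ ↦ (hφ' t).continuousAt.continuousWithinAt)
      (fun t _ ↦ (hφ' t).hasDerivWithinAt) (by simp)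
      (fun t _ ↦ (hB₁ t).continuousAt.continuousWithinAt) (fun t _ ↦ (hB₁ t).hasDerivWithinAt) hK
  have hφ_le := image_le_of_deriv_right_le_deriv_boundary
    (fun t _ ↦ (hφ t).continuousAt.continuousWithinAt) (fun t _ ↦ (hφ t).hasDerivWithinAt)
    (by simp) (fun t _ ↦ (hB₂ t).continuousAt.continuousWithinAt)
    (fun t _ ↦ (hB₂ t).hasDerivWithinAt) (fun t ht ↦ hφ'_le t (Ico_subset_Icc_self ht))
    (right_mem_Icc.2 zero_le_one)
  linarith

theorem newton_cubic_term_le {m L κ η r lam : ℝ} (hm : 0 < m) (hL : 0 < L)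
    (hη : η = m ^ 2 / (8 * L) * min (3 * (1 - 2 * κ)) 2) (hr₀ : 0 ≤ r) (hr : r ≤ 4 * η / m)
    (hlam : m / 2 * r ^ 2 ≤ lam) : L * r ^ 3 / 6 ≤ (1 / 2 - κ) * lam := by
  have hLη : L * η ≤ 3 * m ^ 2 * (1 - 2 * κ) / 8 :=
    calc L * η = m ^ 2 / 8 * min (3 * (1 - 2 * κ)) 2 := by rw [hη]; field_simp
      _ ≤ m ^ 2 / 8 * (3 * (1 - 2 * κ)) := by gcongr; exact min_le_left _ _
      _ = 3 * m ^ 2 * (1 - 2 * κ) / 8 := by ring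
  have hη₀ : 0 ≤ 4 * η / m := hr₀.trans hr
  have hlam₀ : 0 ≤ lam := le_trans (by positivity) hlam
  calc L * r ^ 3 / 6 = L * r * r ^ 2 / 6 := by ring
    _ ≤ L * (4 * η / m) * (2 / m * lam) / 6 := by
      gcongr
      rw [div_mul_eq_mul_div, le_div_iff₀ hm]
      linarith
    _ = L * η * (4 / (3 * m ^ 2)) * lam := by ring
    _ ≤ 3 * m ^ 2 * (1 - 2 * κ) / 8 * (4 / (3 * m ^ 2)) * lam := by gcongr
    _ = (1 / 2 - κ) * lam := by field_simp; ring

theorem newton_error_terms_le {m η γg γh r : ℝ} (hγg : 0 ≤ γg) (hγh : 0 ≤ γh) (hr₀ : 0 ≤ r)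
    (hr : r ≤ 4 * η / m) :
    γg * r + γh / 2 * r ^ 2 ≤ (8 * γg * η / m + 16 * γh * η ^ 2 / m ^ 2) / 2 :=
  calc γg * r + γh / 2 * r ^ 2 ≤ γg * (4 * η / m) + γh / 2 * (4 * η / m) ^ 2 := by gcongr
    _ = (8 * γg * η / m + 16 * γh * η ^ 2 / m ^ 2) / 2 := by ring

section InnerProductSpace

variable {E : Type*} [NormedAddCommGroup E] [InnerProductSpace ℝ E]

theorem ContinuousLinearMap.inner_apply_self_le (A : E →L[ℝ] E) (v : E) :
    ⟪A v, v⟫ ≤ ‖A‖ * ‖v‖ ^ 2 :=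
  calc ⟪A v, v⟫ ≤ ‖A v‖ * ‖v‖ := real_inner_le_norm _ _
    _ ≤ ‖A‖ * ‖v‖ * ‖v‖ := by gcongr; exact A.le_opNorm v
    _ = ‖A‖ * ‖v‖ ^ 2 := by ring

theorem sub_mul_sq_le_inner_of_norm_sub_le {A B : E →L[ℝ] E} {m γ : ℝ}
    (hA : ∀ v, m * ‖v‖ ^ 2 ≤ ⟪A v, v⟫) (hAB : ‖B - A‖ ≤ γ) (v : E) :
    (m - γ) * ‖v‖ ^ 2 ≤ ⟪B v, v⟫ := by
  have hdiff : ⟪(A - B) v, v⟫ ≤ γ * ‖v‖ ^ 2 :=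
    ((A - B).inner_apply_self_le v).trans (by rw [norm_sub_rev]; gcongr)
  rw [sub_apply, inner_sub_left] at hdiff
  nlinarith [hA v]

theorem norm_le_div_of_mul_sq_le_inner {g u : E} {c : ℝ} (hc : 0 < c)
    (h : c * ‖u‖ ^ 2 ≤ ⟪g, u⟫) : ‖u‖ ≤ ‖g‖ / c := by
  rw [le_div_iff₀ hc]
  rcases (norm_nonneg u).eq_or_lt with hu | hu
  · rw [← hu, zero_mul]; positivity
  · nlinarith [real_inner_le_norm g u]

theorem inner_newton_model_le {a g u : E} {A H : E →L[ℝ] E} {γg γh : ℝ} (hHu : H u = g)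
    (hg : ‖g - a‖ ≤ γg) (hH : ‖H - A‖ ≤ γh) :
    ⟪a, -u⟫ + ⟪A (-u), -u⟫ / 2 ≤ -⟪g, u⟫ / 2 + γg * ‖u‖ + γh / 2 * ‖u‖ ^ 2 := by
  have hgrad : ⟪g - a, u⟫ ≤ γg * ‖u‖ := (real_inner_le_norm _ _).trans (by gcongr)
  have hhess : ⟪(A - H) u, u⟫ ≤ γh * ‖u‖ ^ 2 :=
    ((A - H).inner_apply_self_le u).trans (by rw [norm_sub_rev]; gcongr)
  simp only [map_neg, inner_neg_left, inner_neg_right, neg_neg, inner_sub_left, sub_apply, hHu]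
    at hgrad hhess ⊢
  linarith

variable [CompleteSpace E]

theorem ContinuousLinearMap.isInvertible_of_coercive {H : E →L[ℝ] E} {c : ℝ}
    (hc : 0 < c) (hH : ∀ v, c * ‖v‖ ^ 2 ≤ ⟪H v, v⟫) : H.IsInvertible := by
  have hB : IsCoercive (innerSL ℝ ∘L H) := ⟨c, hc, fun v ↦ by rw [mul_assoc, ← sq]; exact hH v⟩
  refine ⟨hB.continuousLinearEquivOfBilin, ?_⟩
  ext v
  exact ext_inner_right ℝ (hB.continuousLinearEquivOfBilin_apply v)

theorem ContDiff.differentiable_gradient {f : E → ℝ} (hf : ContDiff ℝ 2 f) :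
    Differentiable ℝ (gradient f) :=
  (InnerProductSpace.toDual ℝ E).symm.toContinuousLinearEquiv.differentiable.comp
    ((hf.fderiv_right (m := 1) (by norm_num)).differentiable one_ne_zero)

theorem le_taylor_of_lipschitz_hessian {f : E → ℝ} {L : ℝ} {x : E}
    (hf : Differentiable ℝ f) (hgrad : Differentiable ℝ (gradient f))
    (hlip : ∀ y, ‖fderiv ℝ (gradient f) y - fderiv ℝ (gradient f) x‖ ≤ L * ‖y - x‖) (Δ : E) :
    f (x + Δ) ≤ f x + ⟪gradient f x, Δ⟫ + ⟪fderiv ℝ (gradient f) x Δ, Δ⟫ / 2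
      + L * ‖Δ‖ ^ 3 / 6 := by
  set D := fderiv ℝ (gradient f)
  have hline (t : ℝ) : HasDerivAt (fun s : ℝ ↦ x + s • Δ) Δ t := by
    simpa using ((hasDerivAt_id t).smul_const Δ).const_add x
  have hφ (t : ℝ) : HasDerivAt (fun s ↦ f (x + s • Δ)) ⟪gradient f (x + t • Δ), Δ⟫ t := by
    have h := (hf (x + t • Δ)).hasFDerivAt.comp_hasDerivAt t (hline t)
    rwa [← inner_gradient_left] at h
  have hφ' (t : ℝ) :
      HasDerivAt (fun s ↦ ⟪gradient f (x + s • Δ), Δ⟫) ⟪D (x + t • Δ) Δ, Δ⟫ t := by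
    simpa using ((hgrad _).hasFDerivAt.comp_hasDerivAt t (hline t)).inner ℝ (hasDerivAt_const t Δ)
  have hK (t : ℝ) (ht : t ∈ Ico (0 : ℝ) 1) :
      ⟪D (x + t • Δ) Δ, Δ⟫ ≤ ⟪D (x + (0 : ℝ) • Δ) Δ, Δ⟫ + L * ‖Δ‖ ^ 3 * t := by
    have h := ((D (x + t • Δ) - D x).inner_apply_self_le Δ).trans
      (mul_le_mul_of_nonneg_right (hlip (x + t • Δ)) (sq_nonneg ‖Δ‖))
    rw [sub_apply, inner_sub_left, add_sub_cancel_left, norm_smul, Real.norm_of_nonneg ht.1] at h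
    rw [zero_smul, add_zero]
    linarith
  simpa using le_taylor_two_of_deriv2_le hφ hφ' hK

theorem inexact_newton_step_le {f : E → ℝ} {L γg γh : ℝ} {x g u : E} {H : E →L[ℝ] E}
    (hf : Differentiable ℝ f) (hgrad : Differentiable ℝ (gradient f))
    (hlip : ∀ y, ‖fderiv ℝ (gradient f) y - fderiv ℝ (gradient f) x‖ ≤ L * ‖y - x‖)
    (hHu : H u = g) (hg : ‖g - gradient f x‖ ≤ γg) (hH : ‖H - fderiv ℝ (gradient f) x‖ ≤ γh) :
    f (x + -u) ≤ f x - ⟪g, u⟫ / 2 + γg * ‖u‖ + γh / 2 * ‖u‖ ^ 2 + L * ‖u‖ ^ 3 / 6 := by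
  have htaylor := le_taylor_of_lipschitz_hessian hf hgrad hlip (-u)
  rw [norm_neg] at htaylor
  linarith [inner_newton_model_le hHu hg hH]

end InnerProductSpace

theorem robust_newton_unit_step_general {p : ℕ} (f : EuclideanSpace ℝ (Fin p) → ℝ)
    (m L κ₁ η γg γh ζ : ℝ) (hm : 0 < m) (hL : 0 < L)
    (hf : ContDiff ℝ 2 f)
    (hconv : ∀ θ' v : EuclideanSpace ℝ (Fin p), m * ‖v‖ ^ 2 ≤ ⟪hessianOf f θ' v, v⟫)
    (hlip : ∀ θ₁ θ₂ : EuclideanSpace ℝ (Fin p),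
      ‖hessianOf f θ₁ - hessianOf f θ₂‖ ≤ L * ‖θ₁ - θ₂‖)
    (hη : η = m ^ 2 / (8 * L) * min (3 * (1 - 2 * κ₁)) 2)
    (θ : EuclideanSpace ℝ (Fin p)) (hθ : ‖gradient f θ‖ < η)
    (g : EuclideanSpace ℝ (Fin p))
    (H : EuclideanSpace ℝ (Fin p) →L[ℝ] EuclideanSpace ℝ (Fin p))
    (hg : ‖g - gradient f θ‖ ≤ γg) (hH : ‖H - hessianOf f θ‖ ≤ γh)
    (hγgη : γg ≤ η) (hγhm : γh ≤ m / 2)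
    (Δ : EuclideanSpace ℝ (Fin p)) (hΔ : Δ = -(H.inverse g))
    (lam2 : ℝ) (hlam2 : lam2 = ⟪g, H.inverse g⟫)
    (hζ : 8 * γg * η / m + 16 * γh * η ^ 2 / m ^ 2 ≤ ζ) :
    f (θ + Δ) ≤ f θ - κ₁ * lam2 + ζ / 2 := by
  subst hΔ
  set u := H.inverse g
  have hH_coercive (v) : m / 2 * ‖v‖ ^ 2 ≤ ⟪H v, v⟫ :=
    le_trans (by gcongr; linarith) (sub_mul_sq_le_inner_of_norm_sub_le (hconv θ) hH v)
  have hHu : H u = g :=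
    (H.isInvertible_of_coercive (half_pos hm) hH_coercive).self_apply_inverse g
  have hu_sq : m / 2 * ‖u‖ ^ 2 ≤ lam2 := by rw [hlam2, ← hHu]; exact hH_coercive u
  have hg_norm : ‖g‖ * 2 ≤ 4 * η := by linarith [norm_le_norm_sub_add g (gradient f θ)]
  have hu_norm : ‖u‖ ≤ 4 * η / m :=
    (norm_le_div_of_mul_sq_le_inner (half_pos hm) (hu_sq.trans_eq hlam2)).trans
      (by rw [div_div_eq_mul_div]; exact div_le_div_of_nonneg_right hg_norm hm.le)
  have hstep := inexact_newton_step_le (hf.differentiable two_ne_zero) hf.differentiable_gradient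
    (fun y ↦ hlip y θ) hHu hg hH
  rw [← hlam2] at hstep
  linarith [newton_cubic_term_le hm hL hη (norm_nonneg u) hu_norm hu_sq,
    newton_error_terms_le ((norm_nonneg _).trans hg) ((norm_nonneg _).trans hH) (norm_nonneg u)
      hu_norm]

/-- when the gradient is small, the noisy Newton step with unit stepsize
satisfies the robust backtracking-linesearch exit condition. -/
theorem robust_newton_unit_step {p : ℕ} (f : EuclideanSpace ℝ (Fin p) → ℝ)
    (m L κ₁ η γg γh ζ : ℝ) (hm : 0 < m) (hL : 0 < L)
    (hκ₁ : κ₁ ∈ Set.Ioo (0 : ℝ) (1 / 2))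
    (hf : ContDiff ℝ 2 f)
    (hconv : ∀ θ' v : EuclideanSpace ℝ (Fin p), m * ‖v‖ ^ 2 ≤ ⟪hessianOf f θ' v, v⟫)
    (hlip : ∀ θ₁ θ₂ : EuclideanSpace ℝ (Fin p),
      ‖hessianOf f θ₁ - hessianOf f θ₂‖ ≤ L * ‖θ₁ - θ₂‖)
    (hη : η = m ^ 2 / (8 * L) * min (3 * (1 - 2 * κ₁)) 2)
    (θ : EuclideanSpace ℝ (Fin p)) (hθ : ‖gradient f θ‖ < η)
    (g : EuclideanSpace ℝ (Fin p))
    (H : EuclideanSpace ℝ (Fin p) →L[ℝ] EuclideanSpace ℝ (Fin p))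
    (hg : ‖g - gradient f θ‖ ≤ γg) (hH : ‖H - hessianOf f θ‖ ≤ γh)
    (hγgη : γg ≤ η) (hγhm : γh ≤ m / 2)
    (Δ : EuclideanSpace ℝ (Fin p)) (hΔ : Δ = -(H.inverse g))
    (lam2 : ℝ) (hlam2 : lam2 = ⟪g, H.inverse g⟫)
    (hζ : 8 * γg * η / m + 16 * γh * η ^ 2 / m ^ 2 ≤ ζ) :
    f (θ + Δ) ≤ f θ - κ₁ * lam2 + ζ / 2 :=
  robust_newton_unit_step_general f m L κ₁ η γg γh ζ hm hL hf hconv hlip hη θ hθ g H hg hH hγgη hγhm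
    Δ hΔ lam2 hlam2 hζ
end

section
/- Let f : ℝ^p → ℝ be twice continuously differentiable with L-Lipschitz Hessian, and let g : ℝ^p → ℝ^p satisfy ‖g(φ) − ∇f(φ)‖₂ ≤ ε for all φ ∈ ℝ^p. Then for every θ, v ∈ ℝ^p and every δ > 0, the finite-difference Hessian–vector product h_v(θ) = (g(θ + δv) − g(θ))/δ satisfies ‖h_v(θ) − ∇²f(θ) v‖₂ ≤ 2ε/δ + (L/2)·δ·‖v‖₂². -/
open scoped RealInnerProductSpace

/-! The bound `‖∇f(θ + w) - ∇f(θ) - ∇²f(θ) w‖ ≤ (L/2)‖w‖²` comes from comparing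
`t ↦ ∇f(θ + t w) - ∇f(θ) - t ∇²f(θ) w`, whose derivative has norm at most `L t ‖w‖²`, with
`t ↦ (L/2) t² ‖w‖²` on `[0, 1]`. The two oracle errors then contribute `2ε/δ` after dividing by `δ`. -/

section

variable {E F : Type*} [NormedAddCommGroup E] [NormedSpace ℝ E]
  [NormedAddCommGroup F] [NormedSpace ℝ F]

theorem norm_sub_sub_fderiv_apply_le_of_lipschitz_fderiv {G : E → F} {G' : E → E →L[ℝ] F}
    {L : ℝ} {x : E} (hG : ∀ y, HasFDerivAt G (G' y) y)
    (hlip : ∀ y, ‖G' y - G' x‖ ≤ L * ‖y - x‖) (w : E) :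
    ‖G (x + w) - G x - G' x w‖ ≤ L / 2 * ‖w‖ ^ 2 := by
  set R : ℝ → F := fun t => G (x + t • w) - G x - t • G' x w
  have hR : ∀ t, HasDerivAt R (G' (x + t • w) w - G' x w) t := fun t => by
    have hline : HasDerivAt (fun t : ℝ => x + t • w) w t := by
      simpa using ((hasDerivAt_id t).smul_const w).const_add x
    convert (((hG _).comp_hasDerivAt t hline).sub_const (G x)).sub
      ((hasDerivAt_id t).smul_const (G' x w)) using 1
    · rfl
    · rw [one_smul]
  have hB : ∀ t, HasDerivAt (fun t : ℝ => L / 2 * t ^ 2 * ‖w‖ ^ 2) (L * t * ‖w‖ ^ 2) t := fun t =>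
    (((hasDerivAt_pow 2 t).const_mul (L / 2)).mul_const (‖w‖ ^ 2)).congr_deriv (by ring)
  have hbound : ∀ t ∈ Set.Ico (0 : ℝ) 1, ‖G' (x + t • w) w - G' x w‖ ≤ L * t * ‖w‖ ^ 2 := by
    rintro t ⟨ht, -⟩
    calc ‖G' (x + t • w) w - G' x w‖ = ‖(G' (x + t • w) - G' x) w‖ := rfl
      _ ≤ ‖G' (x + t • w) - G' x‖ * ‖w‖ := (G' (x + t • w) - G' x).le_opNorm w
      _ ≤ L * ‖x + t • w - x‖ * ‖w‖ := by gcongr; exact hlip _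
      _ = L * t * ‖w‖ ^ 2 := by
        rw [add_sub_cancel_left, norm_smul, Real.norm_of_nonneg ht]; ring
  simpa [R] using image_norm_le_of_norm_deriv_right_le_deriv_boundary
    (fun t _ => (hR t).continuousAt.continuousWithinAt) (fun t _ => (hR t).hasDerivWithinAt)
    (by simp [R]) hB hbound (Set.right_mem_Icc.2 zero_le_one)

theorem norm_finiteDifference_sub_le {g G : E → F} {ε : ℝ}
    (hg : ∀ φ, ‖g φ - G φ‖ ≤ ε) (H : E →L[ℝ] F) (θ v : E) {δ : ℝ} (hδ : 0 < δ) :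
    ‖δ⁻¹ • (g (θ + δ • v) - g θ) - H v‖
      ≤ 2 * ε / δ + δ⁻¹ * ‖G (θ + δ • v) - G θ - H (δ • v)‖ := by
  have hsplit : δ⁻¹ • (g (θ + δ • v) - g θ) - H v = δ⁻¹ • ((g (θ + δ • v) - G (θ + δ • v))
      - (g θ - G θ) + (G (θ + δ • v) - G θ - H (δ • v))) := by
    rw [map_smul, smul_add, smul_sub _ _ (δ • H v), inv_smul_smul₀ hδ.ne']
    simp only [smul_sub]
    abel
  rw [hsplit, norm_smul, Real.norm_of_nonneg (inv_nonneg.2 hδ.le), div_eq_inv_mul, ← mul_add]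
  gcongr
  calc _ ≤ ‖g (θ + δ • v) - G (θ + δ • v)‖ + ‖g θ - G θ‖
        + ‖G (θ + δ • v) - G θ - H (δ • v)‖ := norm_add_le_of_le (norm_sub_le _ _) le_rfl
    _ ≤ _ := by linarith [hg (θ + δ • v), hg θ]

end

theorem hasFDerivAt_gradient_hessianOf {p : ℕ} {f : EuclideanSpace ℝ (Fin p) → ℝ}
    (hf : ContDiff ℝ 2 f) (θ : EuclideanSpace ℝ (Fin p)) :
    HasFDerivAt (gradient f) (hessianOf f θ) θ := by
  have hgrad : ContDiff ℝ 1 (gradient f) :=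
    (InnerProductSpace.toDual ℝ _).symm.toContinuousLinearEquiv.contDiff.comp
      (hf.fderiv_right (by norm_num))
  exact (hgrad.differentiable one_ne_zero θ).hasFDerivAt

theorem finite_difference_hessian_vector_product_general {p : ℕ}
    (f : EuclideanSpace ℝ (Fin p) → ℝ) (hf : ContDiff ℝ 2 f)
    (L : ℝ)
    (hlip : ∀ θ₁ θ₂ : EuclideanSpace ℝ (Fin p),
      ‖hessianOf f θ₁ - hessianOf f θ₂‖ ≤ L * ‖θ₁ - θ₂‖)
    (g : EuclideanSpace ℝ (Fin p) → EuclideanSpace ℝ (Fin p)) (ε : ℝ)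
    (hg : ∀ φ : EuclideanSpace ℝ (Fin p), ‖g φ - gradient f φ‖ ≤ ε) :
    ∀ (θ v : EuclideanSpace ℝ (Fin p)) (δ : ℝ), 0 < δ →
      ‖δ⁻¹ • (g (θ + δ • v) - g θ) - hessianOf f θ v‖
        ≤ 2 * ε / δ + L / 2 * δ * ‖v‖ ^ 2 := by
  intro θ v δ hδ
  have htaylor := norm_sub_sub_fderiv_apply_le_of_lipschitz_fderiv
    (hasFDerivAt_gradient_hessianOf hf) (fun y => hlip y θ) (δ • v)
  calc _ ≤ 2 * ε / δ + δ⁻¹ * ‖gradient f (θ + δ • v) - gradient f θ - hessianOf f θ (δ • v)‖ :=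
        norm_finiteDifference_sub_le hg _ θ v hδ
    _ ≤ 2 * ε / δ + δ⁻¹ * (L / 2 * ‖δ • v‖ ^ 2) := by gcongr
    _ = 2 * ε / δ + L / 2 * δ * ‖v‖ ^ 2 := by
      rw [norm_smul, Real.norm_of_nonneg hδ.le]
      field_simp

/-- error bound for finite-difference Hessian–vector products computed
from an `ε`-accurate gradient oracle. -/
theorem finite_difference_hessian_vector_product {p : ℕ}
    (f : EuclideanSpace ℝ (Fin p) → ℝ) (hf : ContDiff ℝ 2 f)
    (L : ℝ) (hL : 0 < L)
    (hlip : ∀ θ₁ θ₂ : EuclideanSpace ℝ (Fin p),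
      ‖hessianOf f θ₁ - hessianOf f θ₂‖ ≤ L * ‖θ₁ - θ₂‖)
    (g : EuclideanSpace ℝ (Fin p) → EuclideanSpace ℝ (Fin p)) (ε : ℝ)
    (hg : ∀ φ : EuclideanSpace ℝ (Fin p), ‖g φ - gradient f φ‖ ≤ ε) :
    ∀ (θ v : EuclideanSpace ℝ (Fin p)) (δ : ℝ), 0 < δ →
      ‖δ⁻¹ • (g (θ + δ • v) - g θ) - hessianOf f θ v‖
        ≤ 2 * ε / δ + L / 2 * δ * ‖v‖ ^ 2 :=
  finite_difference_hessian_vector_product_general f hf L hlip g ε hg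
end
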